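/- For all n ≥ 0, the number of nonnesting permutations of the multiset {1,1,2,2,…,n,n} that avoid both patterns 132 and 213 equals F_n², the square of the nth Fibonacci number. -/

import Mathlib

/-!
A word avoids `132` and `213` exactly when, in every subsequence `a b c` with `a < c`, also
`a ≤ b ≤ c`. Looking at the first few letters of such a nonnesting permutation `w` of
`{1,1,…,n,n}` (`n ≥ 1`) shows that exactly one of the following holds:
* `w` starts with `n`;
* `w = [k+1, k+1, …, n, n] ++ Y` with `k < n - 1` and `Y` a word of the same kind on `{1,…,k}`;
* `w = [n-1, n, n-1, n] ++ Y` with `Y` a word of the same kind on `{1,…,n-2}`.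
Writing `S n` for the words on `{1,…,n}` and `T n` for the tails `l` with `n :: l ∈ S n`, one has
`T (n+1) = (n+1) :: S n ⊔ n :: (n+1) :: T n`, so `|T n| = ∑_{k<n} |S k|`, which also counts the
second family. Hence `|S n| = |T n| + |T (n-1)| + |S (n-2)|`, and
`∑_{k<n} fib (k+1) ^ 2 = fib n * fib (n+1)` gives `|S n| = fib (n+1) ^ 2`.
-/

/-- `w` is a permutation of the multiset `{1,1,2,2,…,n,n}`:
a word in which every value in `{1,…,n}` occurs exactly twice
and no other value occurs. -/
def IsMultisetPerm (n : ℕ) (w : List ℕ) : Prop :=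
  ∀ i : ℕ, w.count i = if 1 ≤ i ∧ i ≤ n then 2 else 0

/-- `t` is order-isomorphic to the word `σ`:
same length, and entries compare (both `<` and `=`) in the same way. -/
def OrderIsoWord (t σ : List ℕ) : Prop :=
  t.length = σ.length ∧
  ∀ r s : ℕ, r < σ.length → s < σ.length →
    ((t.getD r 0 < t.getD s 0 ↔ σ.getD r 0 < σ.getD s 0) ∧
     (t.getD r 0 = t.getD s 0 ↔ σ.getD r 0 = σ.getD s 0))

/-- `w` contains the pattern `σ`: some subsequence of `w`
is order-isomorphic to `σ`. -/
def Contains (w σ : List ℕ) : Prop :=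
  ∃ t : List ℕ, t.Sublist w ∧ OrderIsoWord t σ

/-- `w` avoids the pattern `σ`. -/
def Avoids (w σ : List ℕ) : Prop := ¬ Contains w σ

/-- `w` is a nonnesting permutation of `{1,1,2,2,…,n,n}`:
it avoids the patterns `1221` and `2112`. -/
def IsNonnesting (n : ℕ) (w : List ℕ) : Prop :=
  IsMultisetPerm n w ∧ Avoids w [1,2,2,1] ∧ Avoids w [2,1,1,2]

open List

theorem contains_1221_iff {w : List ℕ} :
    Contains w [1,2,2,1] ↔ ∃ a b, a < b ∧ [a, b, b, a] <+ w := by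
  constructor
  · rintro ⟨t, ht, hlen, hiso⟩
    match t, hlen with
    | [a, b, c, d], _ =>
      obtain rfl : b = c := (hiso 1 2 (by decide) (by decide)).2.2 rfl
      obtain rfl : a = d := (hiso 0 3 (by decide) (by decide)).2.2 rfl
      exact ⟨a, b, (hiso 0 1 (by decide) (by decide)).1.2 (by decide), ht⟩
  · rintro ⟨a, b, hab, h⟩
    refine ⟨_, h, rfl, fun r s hr hs => ?_⟩
    simp only [length_cons, length_nil] at hr hs
    interval_cases r <;> interval_cases s <;> simp <;> omega

theorem contains_2112_iff {w : List ℕ} :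
    Contains w [2,1,1,2] ↔ ∃ a b, b < a ∧ [a, b, b, a] <+ w := by
  constructor
  · rintro ⟨t, ht, hlen, hiso⟩
    match t, hlen with
    | [a, b, c, d], _ =>
      obtain rfl : b = c := (hiso 1 2 (by decide) (by decide)).2.2 rfl
      obtain rfl : a = d := (hiso 0 3 (by decide) (by decide)).2.2 rfl
      exact ⟨a, b, (hiso 1 0 (by decide) (by decide)).1.2 (by decide), ht⟩
  · rintro ⟨a, b, hba, h⟩
    refine ⟨_, h, rfl, fun r s hr hs => ?_⟩
    simp only [length_cons, length_nil] at hr hs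
    interval_cases r <;> interval_cases s <;> simp <;> omega

theorem contains_132_iff {w : List ℕ} :
    Contains w [1,3,2] ↔ ∃ a b c, a < c ∧ c < b ∧ [a, b, c] <+ w := by
  constructor
  · rintro ⟨t, ht, hlen, hiso⟩
    match t, hlen with
    | [a, b, c], _ =>
      exact ⟨a, b, c, (hiso 0 2 (by decide) (by decide)).1.2 (by decide),
        (hiso 2 1 (by decide) (by decide)).1.2 (by decide), ht⟩
  · rintro ⟨a, b, c, hac, hcb, h⟩
    refine ⟨_, h, rfl, fun r s hr hs => ?_⟩
    simp only [length_cons, length_nil] at hr hs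
    interval_cases r <;> interval_cases s <;> simp <;> omega

theorem contains_213_iff {w : List ℕ} :
    Contains w [2,1,3] ↔ ∃ a b c, b < a ∧ a < c ∧ [a, b, c] <+ w := by
  constructor
  · rintro ⟨t, ht, hlen, hiso⟩
    match t, hlen with
    | [a, b, c], _ =>
      exact ⟨a, b, c, (hiso 1 0 (by decide) (by decide)).1.2 (by decide),
        (hiso 0 2 (by decide) (by decide)).1.2 (by decide), ht⟩
  · rintro ⟨a, b, c, hba, hac, h⟩
    refine ⟨_, h, rfl, fun r s hr hs => ?_⟩
    simp only [length_cons, length_nil] at hr hs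
    interval_cases r <;> interval_cases s <;> simp <;> omega

/-- Avoiding `1221` and `2112` (`not_nested`) and avoiding `132` and `213` (`between`). -/
structure Admissible (w : List ℕ) : Prop where
  not_nested : ∀ {a b : ℕ}, a ≠ b → ¬ [a, b, b, a] <+ w
  between : ∀ {a b c : ℕ}, [a, b, c] <+ w → a < c → a ≤ b ∧ b ≤ c

theorem isNonnesting_and_avoids_iff {n : ℕ} {w : List ℕ} :
    IsNonnesting n w ∧ Avoids w [1,3,2] ∧ Avoids w [2,1,3] ↔
      IsMultisetPerm n w ∧ Admissible w := by
  simp only [IsNonnesting, Avoids, contains_1221_iff, contains_2112_iff, contains_132_iff,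
    contains_213_iff, not_exists, not_and]
  constructor
  · rintro ⟨⟨hperm, h1221, h2112⟩, h132, h213⟩
    refine ⟨hperm, fun {a b} hab hs => ?_, fun {a b c} hs hac => ?_⟩
    · rcases Nat.lt_or_gt_of_ne hab with h | h
      exacts [h1221 a b h hs, h2112 a b h hs]
    · by_contra! hb
      by_cases hab : a ≤ b
      exacts [h132 a b c hac (hb hab) hs, h213 a b c (by omega) hac hs]
  · rintro ⟨hperm, h⟩
    refine ⟨⟨hperm, fun a b hab => h.not_nested hab.ne, fun a b hab => h.not_nested hab.ne'⟩,
      fun a b c hac hcb hs => ?_, fun a b c hba hac hs => ?_⟩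
    · have := h.between hs hac
      omega
    · have := h.between hs hac
      omega

theorem List.sublist_or_sublist_of_sublist_append {α : Type*} [Preorder α] {t p q : List α}
    (h : t <+ p ++ q) (hsep : ∀ x ∈ p, ∀ y ∈ q, y < x)
    (ht : ∀ x ∈ t.head?, ∀ y ∈ t.getLast?, x ≤ y) : t <+ p ∨ t <+ q := by
  obtain ⟨_ | ⟨a, l₁⟩, l₂, rfl, h₁, h₂⟩ := sublist_append_iff.1 h
  · exact .inr h₂
  · rcases l₂.eq_nil_or_concat with rfl | ⟨l₂, c, rfl⟩
    · simpa using Or.inl h₁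
    · have hac : a ≤ c :=
        ht a (by simp) c (by rw [concat_eq_append, ← append_assoc, getLast?_concat]; rfl)
      exact absurd (hsep a (h₁.subset (by simp)) c (h₂.subset (by simp))) (not_lt_of_ge hac)

namespace Admissible

theorem sublist {v w : List ℕ} (h : Admissible w) (hv : v <+ w) : Admissible v :=
  ⟨fun hab hs => h.not_nested hab (hs.trans hv), fun hs => h.between (hs.trans hv)⟩

theorem of_pairwise {l : List ℕ} (hl : l.Pairwise (· ≤ ·)) : Admissible l := by
  have hl' : ∀ {a b}, [a, b] <+ l → a ≤ b := pairwise_iff_forall_sublist.1 hl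
  constructor
  · intro a b hab hs
    exact hab (le_antisymm (hl' ((by simp : [a, b] <+ [a, b, b, a]).trans hs))
      (hl' ((by simp : [b, a] <+ [a, b, b, a]).trans hs)))
  · intro a b c hs _
    exact ⟨hl' ((by simp : [a, b] <+ [a, b, c]).trans hs),
      hl' ((by simp : [b, c] <+ [a, b, c]).trans hs)⟩

theorem append {p q : List ℕ} (hp : Admissible p) (hq : Admissible q)
    (hsep : ∀ x ∈ p, ∀ y ∈ q, y < x) : Admissible (p ++ q) := by
  constructor
  · intro a b hab hs
    rcases sublist_or_sublist_of_sublist_append hs hsep (by simp) with hs | hs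
    exacts [hp.not_nested hab hs, hq.not_nested hab hs]
  · intro a b c hs hac
    rcases sublist_or_sublist_of_sublist_append hs hsep (by simpa using hac.le) with hs | hs
    exacts [hp.between hs hac, hq.between hs hac]

theorem pair {b c : ℕ} (hbc : b < c) : Admissible [b, c, b, c] := by
  constructor
  · intro x y hxy hs
    have := hs.eq_of_length rfl
    simp only [cons.injEq, and_true] at this
    omega
  · intro x y z hs hxz
    have hmem : ∀ u ∈ [x, y, z], u = b ∨ u = c := fun u hu => by
      have := hs.subset hu
      simp only [mem_cons, not_mem_nil, or_false] at this
      tauto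
    simp only [mem_cons, not_mem_nil, or_false, forall_eq_or_imp, forall_eq] at hmem
    omega

/-- An occurrence of a pattern that does not lie in `c :: l` uses a copy of `c + 1`; both copies
come before all of `l` and exceed every other letter, which rules out each such occurrence. -/
theorem chain {c : ℕ} {l : List ℕ} (h : Admissible (c :: l)) (hl : ∀ x ∈ l, x ≤ c) :
    Admissible ((c + 1) :: c :: (c + 1) :: l) := by
  have h' := h.sublist (sublist_cons_self c l)
  have hl' : ∀ t, t <+ l → ∀ x ∈ t, x ≤ c := fun t ht x hx => hl x (ht.subset hx)
  constructor
  · intro a b hab hs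
    simp only [sublist_cons_iff, cons.injEq, ↓existsAndEq, and_true, singleton_sublist] at hs
    casesm* _ ∨ _, _ ∧ _ <;> subst_vars
    all_goals first
      | exact h'.not_nested hab ‹_›
      | exact h.not_nested hab (Sublist.cons_cons _ ‹_›)
      | (have := hl' _ ‹_›; simp at this)
      | (have := hl _ ‹_›; omega)
  · intro a b d hs hab
    simp only [sublist_cons_iff, cons.injEq, ↓existsAndEq, and_true, singleton_sublist, nil_eq,
      nil_sublist] at hs
    casesm* _ ∨ _, _ ∧ _ <;> subst_vars
    all_goals first
      | exact h'.between ‹_› hab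
      | exact h.between (Sublist.cons_cons _ ‹_›) hab
      | (have := hl' _ ‹_›; simp at this; omega)
      | (have := hl _ ‹_›; omega)
      | omega

theorem le_and_le_of_cons_cons {a c b : ℕ} {l : List ℕ} (h : Admissible (a :: c :: l))
    (hb : b ∈ l) (hab : a < b) : a ≤ c ∧ c ≤ b :=
  h.between (by simpa using hb) hab

theorem eq_succ_of_cons_cons {a c : ℕ} {l : List ℕ} (h : Admissible (a :: c :: l))
    (hmem : a + 1 ∈ c :: l) (hca : c ≠ a) : c = a + 1 := by
  by_contra hc
  have := h.le_and_le_of_cons_cons ((mem_cons.1 hmem).resolve_left (Ne.symm hc))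
    (Nat.lt_succ_self a)
  omega

/-- If `c < b`, a copy of `b` after the `M` in `l` makes `c M b` a `132`, and two copies before it
make `M b b M` a `2112`. -/
theorem le_of_two_le_count {M c b : ℕ} {l : List ℕ} (h : Admissible (M :: c :: l)) (hM : M ∈ l)
    (hb : 2 ≤ l.count b) (hbM : b < M) : b ≤ c := by
  by_contra! hcb
  obtain ⟨P, R, rfl⟩ := append_of_mem hM
  by_cases hbR : b ∈ R
  · have := h.between (by simp [hbR] : [c, M, b] <+ M :: c :: (P ++ M :: R)) hcb
    omega
  · rw [count_append, count_cons_of_ne (by omega), count_eq_zero_of_not_mem hbR] at hb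
    have hP : [b, b] <+ P := replicate_sublist_iff.2 (by omega : 2 ≤ P.count b)
    exact h.not_nested (by omega : M ≠ b)
      (by simpa using (hP.append (by simp : [M] <+ M :: R)).cons c)

theorem lt_of_cons_cons_cons {M c e : ℕ} {l : List ℕ} (h : Admissible (M :: c :: e :: l))
    (hM : M ∈ l) (hcM : c < M) : c < e := by
  by_contra! hec
  rcases hec.lt_or_eq with hec | rfl
  · have := h.between (by simp [hM] : [c, e, M] <+ M :: c :: e :: l) hcM
    omega
  · exact h.not_nested hcM.ne' (by simp [hM])

end Admissible

def ascBlock : ℕ → ℕ → List ℕ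
  | _, 0 => []
  | a, j + 1 => a :: a :: ascBlock (a + 1) j

theorem count_ascBlock (a j x : ℕ) :
    (ascBlock a j).count x = if a ≤ x ∧ x < a + j then 2 else 0 := by
  induction j generalizing a with
  | zero => simp [ascBlock]
  | succ j ih =>
    simp only [ascBlock, count_cons, ih, beq_iff_eq]
    split_ifs <;> omega

theorem mem_ascBlock {a j x : ℕ} : x ∈ ascBlock a j ↔ a ≤ x ∧ x < a + j := by
  rw [← count_pos_iff, count_ascBlock]
  split_ifs <;> simp_all

theorem pairwise_ascBlock (a j : ℕ) : (ascBlock a j).Pairwise (· ≤ ·) := by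
  induction j generalizing a with
  | zero => simp [ascBlock]
  | succ j ih =>
    have : ∀ x ∈ ascBlock (a + 1) j, a ≤ x := fun x hx => by have := mem_ascBlock.1 hx; omega
    simpa [ascBlock, ih] using this

theorem IsMultisetPerm.mem_iff {n : ℕ} {w : List ℕ} (h : IsMultisetPerm n w) {x : ℕ} :
    x ∈ w ↔ 1 ≤ x ∧ x ≤ n := by
  rw [← count_pos_iff, h x]
  split_ifs <;> simp_all

def admissibleWords (n : ℕ) : Set (List ℕ) :=
  {w | IsMultisetPerm n w ∧ Admissible w}

def tailsAfterMax (n : ℕ) : Set (List ℕ) :=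
  {l | n :: l ∈ admissibleWords n}

def ascFamily (n : ℕ) : Set (List ℕ) :=
  ⋃ k ∈ (Finset.range n : Set ℕ), (ascBlock (k + 1) (n + 1 - k) ++ ·) '' admissibleWords k

theorem admissibleWords_finite (n : ℕ) : (admissibleWords n).Finite := by
  refine (finite_toSet (ascBlock 1 n).permutations).subset fun w hw => ?_
  refine mem_permutations.2 (perm_iff_count.2 fun x => ?_)
  rw [hw.1 x, count_ascBlock]
  congr 1
  simp only [eq_iff_iff]
  omega

theorem tailsAfterMax_finite (n : ℕ) : (tailsAfterMax n).Finite :=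
  (admissibleWords_finite n).preimage cons_injective.injOn

theorem admissibleWords_zero : admissibleWords 0 = {[]} := by
  ext w
  refine ⟨fun hw => eq_nil_iff_forall_not_mem.2 fun x hx => ?_, ?_⟩
  · have := hw.1.mem_iff.1 hx
    omega
  · rintro rfl
    exact ⟨fun x => by rw [if_neg (by omega)]; rfl, .of_pairwise .nil⟩

theorem tailsAfterMax_zero : tailsAfterMax 0 = ∅ :=
  Set.eq_empty_of_forall_notMem fun l hl => by simpa using hl.1.mem_iff.1 mem_cons_self

theorem ascBlock_append_mem {k n : ℕ} {Y : List ℕ} (hk : k ≤ n) (hY : Y ∈ admissibleWords k) :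
    ascBlock (k + 1) (n - k) ++ Y ∈ admissibleWords n := by
  refine ⟨fun x => ?_, (Admissible.of_pairwise (pairwise_ascBlock _ _)).append hY.2 ?_⟩
  · rw [count_append, count_ascBlock, hY.1 x]
    split_ifs <;> omega
  · intro x hx y hy
    have := mem_ascBlock.1 hx
    have := hY.1.mem_iff.1 hy
    omega

theorem pair_append_mem {m : ℕ} {Y : List ℕ} (hY : Y ∈ admissibleWords m) :
    [m + 1, m + 2, m + 1, m + 2] ++ Y ∈ admissibleWords (m + 2) := by
  refine ⟨fun x => ?_, (Admissible.pair (by omega)).append hY.2 ?_⟩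
  · simp only [count_append, count_cons, count_nil, beq_iff_eq, hY.1 x]
    split_ifs <;> omega
  · intro x hx y hy
    have := hY.1.mem_iff.1 hy
    simp only [mem_cons, not_mem_nil, or_false] at hx
    omega

theorem cons_mem_tailsAfterMax {n : ℕ} {u : List ℕ} (hu : u ∈ admissibleWords n) :
    (n + 1) :: u ∈ tailsAfterMax (n + 1) := by
  simpa [tailsAfterMax, ascBlock] using ascBlock_append_mem (Nat.le_succ n) hu

theorem chain_mem_tailsAfterMax {n : ℕ} {Z : List ℕ} (hZ : Z ∈ tailsAfterMax n) :
    n :: (n + 1) :: Z ∈ tailsAfterMax (n + 1) := by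
  refine ⟨fun x => ?_, hZ.2.chain fun x hx => (hZ.1.mem_iff.1 (mem_cons_of_mem n hx)).2⟩
  have := hZ.1 x
  simp only [count_cons, beq_iff_eq] at this ⊢
  split_ifs at this ⊢ <;> omega

theorem exists_eq_ascBlock_append {a j : ℕ} {v : List ℕ} (h : Admissible (a :: v)) (ha : a ∉ v)
    (hv : ∀ x, a < x → v.count x = if x ≤ a + j then 2 else 0) :
    ∃ Y, v = ascBlock (a + 1) j ++ Y ∧ ∀ y ∈ Y, y < a := by
  induction j generalizing a v with
  | zero =>
    refine ⟨v, rfl, fun y hy => ?_⟩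
    have hya : y ≠ a := fun hya => ha (hya ▸ hy)
    by_contra! hay
    have := hv y (by omega)
    rw [if_neg (by omega)] at this
    exact (count_pos_iff.2 hy).ne' this
  | succ j ih =>
    have hcount := hv (a + 1) (by omega)
    rw [if_pos (by omega)] at hcount
    rcases v with _ | ⟨c, v⟩
    · simp at hcount
    obtain rfl : c = a + 1 := h.eq_succ_of_cons_cons (count_pos_iff.1 (by omega))
      fun hca => ha (hca ▸ mem_cons_self)
    rw [count_cons_self] at hcount
    rcases v with _ | ⟨d, v⟩
    · simp at hcount
    obtain rfl : d = a + 1 := (h.sublist (by simp) : Admissible (a :: d :: v)).eq_succ_of_cons_cons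
      (count_pos_iff.1 (by omega)) fun hda => ha (hda ▸ by simp)
    rw [count_cons_self] at hcount
    obtain ⟨Y, rfl, hY⟩ := ih (a := a + 1) (v := v) (h.sublist (by simp))
      (count_eq_zero.1 (by omega)) fun x hx => by
        have := hv x (by omega)
        rwa [count_cons_of_ne (by omega), count_cons_of_ne (by omega),
          show a + (j + 1) = a + 1 + j by omega] at this
    refine ⟨Y, rfl, fun y hy => lt_of_le_of_ne (Nat.lt_succ_iff.1 (hY y hy)) ?_⟩
    rintro rfl
    exact ha (by simp [hy])

theorem tailsAfterMax_succ_cases {n : ℕ} {l : List ℕ} (hl : l ∈ tailsAfterMax (n + 1)) :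
    (∃ u ∈ admissibleWords n, l = (n + 1) :: u) ∨
      ∃ l' ∈ tailsAfterMax n, l = n :: (n + 1) :: l' := by
  obtain ⟨hc, h⟩ := hl
  have hM := hc (n + 1)
  rw [if_pos (by omega), count_cons_self] at hM
  rcases l with _ | ⟨c, l⟩
  · simp at hM
  by_cases hcM : c = n + 1
  · subst hcM
    refine .inl ⟨l, ⟨fun x => ?_, h.sublist (by simp)⟩, rfl⟩
    have := hc x
    simp only [count_cons, beq_iff_eq] at this
    split_ifs at this ⊢ <;> omega
  rw [count_cons_of_ne hcM] at hM
  have hc1 := hc.mem_iff.1 (by simp : c ∈ (n + 1) :: c :: l)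
  have hcn : c = n := by
    by_contra hcn
    have hN := hc n
    rw [count_cons_of_ne (by omega), count_cons_of_ne hcn, if_pos (by omega)] at hN
    have := h.le_of_two_le_count (count_pos_iff.1 (by omega)) hN.ge (Nat.lt_succ_self n)
    omega
  subst c
  rcases l with _ | ⟨e, l⟩
  · simp at hM
  have he : e = n + 1 := by
    by_contra he
    rw [count_cons_of_ne he] at hM
    have := h.lt_of_cons_cons_cons (count_pos_iff.1 (by omega)) (Nat.lt_succ_self n)
    have := hc.mem_iff.1 (by simp : e ∈ (n + 1) :: n :: e :: l)
    omega
  subst he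
  refine .inr ⟨l, ⟨fun x => ?_, h.sublist (by simp)⟩, rfl⟩
  have := hc x
  simp only [count_cons, beq_iff_eq] at this ⊢
  split_ifs at this ⊢ <;> omega

theorem cons_cons_mem_ascFamily {n a : ℕ} {v : List ℕ} (hw : a :: a :: v ∈ admissibleWords (n + 1))
    (haM : a ≠ n + 1) : a :: a :: v ∈ ascFamily n := by
  obtain ⟨hc, h⟩ := hw
  have ha := hc.mem_iff.1 mem_cons_self
  have hA := hc a
  rw [if_pos ha, count_cons_self, count_cons_self] at hA
  obtain ⟨Y, rfl, hY⟩ := exists_eq_ascBlock_append (a := a) (v := v) (j := n + 1 - a)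
    (h.sublist (by simp)) (count_eq_zero.1 (by omega)) fun x hx => by
      have := hc x
      rw [count_cons_of_ne (by omega), count_cons_of_ne (by omega)] at this
      rw [this]
      split_ifs <;> omega
  obtain ⟨k, rfl⟩ : ∃ k, a = k + 1 := ⟨a - 1, by omega⟩
  refine Set.mem_biUnion (x := k) (Finset.mem_coe.2 (Finset.mem_range.2 (by omega)))
    ⟨Y, ⟨fun x => ?_, h.sublist (((sublist_append_right _ _).cons _).cons _)⟩, ?_⟩
  · by_cases hx : x < k + 1
    · have := hc x
      rw [count_cons_of_ne (by omega), count_cons_of_ne (by omega), count_append,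
        count_ascBlock, if_neg (by omega), zero_add] at this
      rw [this]
      split_ifs <;> omega
    · rw [if_neg (by omega), count_eq_zero]
      exact fun hxY => hx (hY x hxY)
  · rw [show n + 1 - k = n + 1 - (k + 1) + 1 by omega]
    rfl

theorem exists_eq_pair_append {n a c : ℕ} {v : List ℕ}
    (hw : a :: c :: v ∈ admissibleWords (n + 1)) (haM : a ≠ n + 1) (hca : c ≠ a) :
    ∃ Y, a :: c :: v = [a, a + 1, a, a + 1] ++ Y := by
  obtain ⟨hc, h⟩ := hw
  have ha := hc.mem_iff.1 mem_cons_self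
  have hA := hc a
  rw [if_pos ha, count_cons_self, count_cons_of_ne hca] at hA
  have hB := hc (a + 1)
  rw [if_pos (by omega), count_cons_of_ne (by omega)] at hB
  obtain rfl : c = a + 1 := h.eq_succ_of_cons_cons (count_pos_iff.1 (by omega)) hca
  rw [count_cons_self] at hB
  rcases v with _ | ⟨d, v⟩
  · simp at hA
  have hd : d = a := by
    by_contra hd
    rw [count_cons_of_ne hd] at hA
    obtain rfl : d = a + 1 := (h.sublist (by simp) : Admissible (a :: d :: v)).eq_succ_of_cons_cons
      (count_pos_iff.1 (by omega)) hd
    exact h.not_nested (by omega : a ≠ a + 1)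
      (by simp [count_pos_iff.1 (by omega : 0 < v.count a)])
  subst d
  rw [count_cons_self] at hA
  rw [count_cons_of_ne (by omega)] at hB
  rcases v with _ | ⟨e, Y⟩
  · simp at hB
  have hea : e ≠ a := fun hea => by rw [hea, count_cons_self] at hA; omega
  obtain rfl : e = a + 1 := (h.sublist (by simp) : Admissible (a :: e :: Y)).eq_succ_of_cons_cons
    (count_pos_iff.1 (by omega)) hea
  exact ⟨Y, rfl⟩

theorem exists_of_pair_append_mem {n a : ℕ} {Y : List ℕ}
    (hw : [a, a + 1, a, a + 1] ++ Y ∈ admissibleWords (n + 1)) :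
    ∃ m, n = m + 1 ∧ a = m + 1 ∧ Y ∈ admissibleWords m := by
  obtain ⟨hc, h⟩ := hw
  have ha := hc.mem_iff.1 (by simp : a + 1 ∈ [a, a + 1, a, a + 1] ++ Y)
  have haN : a = n := by
    by_contra haN
    have hC := hc (a + 2)
    rw [if_pos (by omega), count_append, count_cons_of_ne (by omega), count_cons_of_ne (by omega),
      count_cons_of_ne (by omega), count_cons_of_ne (by omega), count_nil, zero_add] at hC
    have h' : Admissible ((a + 1) :: a :: Y) := h.sublist (by simp)
    have := h'.le_and_le_of_cons_cons (count_pos_iff.1 (by omega : 0 < Y.count (a + 2)))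
      (by omega : a + 1 < a + 2)
    omega
  have ha1 := hc.mem_iff.1 (by simp : a ∈ [a, a + 1, a, a + 1] ++ Y)
  obtain ⟨m, rfl⟩ : ∃ m, a = m + 1 := ⟨a - 1, by omega⟩
  subst n
  refine ⟨m, rfl, rfl, fun x => ?_, h.sublist (sublist_append_right _ _)⟩
  have := hc x
  simp only [count_append, count_cons, count_nil, beq_iff_eq] at this
  split_ifs at this ⊢ <;> omega

theorem admissibleWords_succ_cases {n : ℕ} {w : List ℕ} (hw : w ∈ admissibleWords (n + 1)) :
    (∃ l ∈ tailsAfterMax (n + 1), w = (n + 1) :: l) ∨ w ∈ ascFamily n ∨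
      ∃ m, n = m + 1 ∧ ∃ Y ∈ admissibleWords m, w = [m + 1, m + 2, m + 1, m + 2] ++ Y := by
  rcases w with _ | ⟨a, v⟩
  · simpa using hw.1 (n + 1)
  by_cases haM : a = n + 1
  · subst haM
    exact .inl ⟨v, hw, rfl⟩
  have hA := hw.1 a
  rw [if_pos (hw.1.mem_iff.1 mem_cons_self), count_cons_self] at hA
  rcases v with _ | ⟨c, v⟩
  · simp at hA
  by_cases hca : c = a
  · subst c
    exact .inr (.inl (cons_cons_mem_ascFamily hw haM))
  · obtain ⟨Y, hY⟩ := exists_eq_pair_append hw haM hca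
    rw [hY] at hw ⊢
    obtain ⟨m, rfl, rfl, hYm⟩ := exists_of_pair_append_mem hw
    exact .inr (.inr ⟨m, rfl, Y, hYm, rfl⟩)

theorem tailsAfterMax_succ (n : ℕ) :
    tailsAfterMax (n + 1) =
      ((n + 1) :: ·) '' admissibleWords n ∪ (n :: (n + 1) :: ·) '' tailsAfterMax n := by
  ext l
  constructor
  · intro hl
    rcases tailsAfterMax_succ_cases hl with ⟨u, hu, rfl⟩ | ⟨l', hl', rfl⟩
    exacts [.inl ⟨u, hu, rfl⟩, .inr ⟨l', hl', rfl⟩]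
  · rintro (⟨u, hu, rfl⟩ | ⟨l', hl', rfl⟩)
    exacts [cons_mem_tailsAfterMax hu, chain_mem_tailsAfterMax hl']

theorem ncard_tailsAfterMax (n : ℕ) :
    (tailsAfterMax n).ncard = ∑ k ∈ Finset.range n, (admissibleWords k).ncard := by
  induction n with
  | zero => simp [tailsAfterMax_zero]
  | succ n ih =>
    have hdisj : Disjoint (((n + 1) :: ·) '' admissibleWords n)
        ((n :: (n + 1) :: ·) '' tailsAfterMax n) := by
      rw [Set.disjoint_left]
      rintro _ ⟨u, -, rfl⟩ ⟨l, -, h⟩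
      simp at h
    rw [tailsAfterMax_succ, Set.ncard_union_eq hdisj ((admissibleWords_finite n).image _)
      ((tailsAfterMax_finite n).image _), Set.ncard_image_of_injective _ cons_injective,
      Set.ncard_image_of_injective (f := (n :: (n + 1) :: ·)) _ fun _ _ h => by simpa using h, ih,
      Finset.sum_range_succ, add_comm]

theorem exists_eq_cons_cons_of_mem_ascFamily {n : ℕ} {w : List ℕ} (hw : w ∈ ascFamily n) :
    ∃ k < n, ∃ l, w = (k + 1) :: (k + 1) :: l := by
  simp only [ascFamily, Finset.coe_range, Set.mem_iUnion, Set.mem_Iio, Set.mem_image] at hw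
  obtain ⟨k, hk, Y, -, rfl⟩ := hw
  rw [show n + 1 - k = n - k + 1 by omega]
  exact ⟨k, hk, _, rfl⟩

theorem ascFamily_subset (n : ℕ) : ascFamily n ⊆ admissibleWords (n + 1) := by
  simp only [ascFamily, Set.iUnion_subset_iff, Finset.coe_range, Set.mem_Iio]
  rintro k hk _ ⟨Y, hY, rfl⟩
  exact ascBlock_append_mem (by omega) hY

theorem ncard_ascFamily (n : ℕ) :
    (ascFamily n).ncard = ∑ k ∈ Finset.range n, (admissibleWords k).ncard := by
  rw [ascFamily, Set.Finite.ncard_biUnion (Finset.finite_toSet _)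
    (fun k _ => (admissibleWords_finite k).image _), finsum_mem_coe_finset]
  · exact Finset.sum_congr rfl fun k _ =>
      Set.ncard_image_of_injective _ (append_right_injective _)
  · intro k hk k' hk' hne
    simp only [Function.onFun, Set.disjoint_left]
    rintro _ ⟨Y, -, rfl⟩ ⟨Y', -, h⟩
    simp only [Finset.coe_range, Set.mem_Iio] at hk hk'
    rw [show n + 1 - k = n - k + 1 by omega, show n + 1 - k' = n - k' + 1 by omega] at h
    simp only [ascBlock, cons_append, cons.injEq] at h
    omega

theorem admissibleWords_one : admissibleWords 1 = (1 :: ·) '' tailsAfterMax 1 := by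
  ext w
  constructor
  · intro hw
    rcases admissibleWords_succ_cases (n := 0) hw with ⟨l, hl, rfl⟩ | hasc | ⟨m, hm, -⟩
    · exact ⟨l, hl, rfl⟩
    · obtain ⟨k, hk, -⟩ := exists_eq_cons_cons_of_mem_ascFamily hasc
      omega
    · omega
  · rintro ⟨l, hl, rfl⟩
    exact hl

theorem admissibleWords_add_two (m : ℕ) :
    admissibleWords (m + 2) = ((m + 2) :: ·) '' tailsAfterMax (m + 2) ∪ ascFamily (m + 1) ∪
      ([m + 1, m + 2, m + 1, m + 2] ++ ·) '' admissibleWords m := by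
  ext w
  constructor
  · intro hw
    rcases admissibleWords_succ_cases hw with ⟨l, hl, rfl⟩ | hasc | ⟨m', hm, Y, hY, rfl⟩
    · exact .inl (.inl ⟨l, hl, rfl⟩)
    · exact .inl (.inr hasc)
    · obtain rfl : m' = m := by omega
      exact .inr ⟨Y, hY, rfl⟩
  · rintro ((⟨l, hl, rfl⟩ | hasc) | ⟨Y, hY, rfl⟩)
    exacts [hl, ascFamily_subset _ hasc, pair_append_mem hY]

theorem ncard_admissibleWords_add_two (m : ℕ) :
    (admissibleWords (m + 2)).ncard =
      (tailsAfterMax (m + 2)).ncard + (ascFamily (m + 1)).ncard + (admissibleWords m).ncard := by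
  have hasc := (admissibleWords_finite (m + 2)).subset (ascFamily_subset (m + 1))
  have hd₁ : Disjoint (((m + 2) :: ·) '' tailsAfterMax (m + 2)) (ascFamily (m + 1)) := by
    rw [Set.disjoint_left]
    rintro _ ⟨l, -, rfl⟩ hw
    obtain ⟨k, hk, l', h⟩ := exists_eq_cons_cons_of_mem_ascFamily hw
    simp only [cons.injEq] at h
    omega
  have hd₂ : Disjoint (((m + 2) :: ·) '' tailsAfterMax (m + 2) ∪ ascFamily (m + 1))
      (([m + 1, m + 2, m + 1, m + 2] ++ ·) '' admissibleWords m) := by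
    rw [Set.disjoint_left]
    rintro _ (⟨l, -, rfl⟩ | hw) ⟨Y, -, h⟩
    · simp at h
    · obtain ⟨k, hk, l', rfl⟩ := exists_eq_cons_cons_of_mem_ascFamily hw
      simp only [cons_append, cons.injEq] at h
      omega
  rw [admissibleWords_add_two,
    Set.ncard_union_eq hd₂ (((tailsAfterMax_finite _).image _).union hasc)
      ((admissibleWords_finite _).image _),
    Set.ncard_union_eq hd₁ ((tailsAfterMax_finite _).image _) hasc,
    Set.ncard_image_of_injective _ cons_injective,
    Set.ncard_image_of_injective _ (append_right_injective _)]

theorem sum_range_fib_succ_sq (n : ℕ) :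
    ∑ k ∈ Finset.range n, Nat.fib (k + 1) ^ 2 = Nat.fib n * Nat.fib (n + 1) := by
  induction n with
  | zero => simp
  | succ n ih =>
    rw [Finset.sum_range_succ, ih, Nat.fib_add_two]
    ring

theorem ncard_admissibleWords (n : ℕ) : (admissibleWords n).ncard = Nat.fib (n + 1) ^ 2 := by
  induction n using Nat.strong_induction_on with
  | _ n ih =>
  have hsum : ∀ k ≤ n,
      ∑ i ∈ Finset.range k, (admissibleWords i).ncard = Nat.fib k * Nat.fib (k + 1) := by
    intro k hk
    rw [Finset.sum_congr rfl fun i hi => ih i (by rw [Finset.mem_range] at hi; omega),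
      sum_range_fib_succ_sq]
  match n, ih, hsum with
  | 0, _, _ => simp [admissibleWords_zero]
  | 1, _, hsum =>
    rw [admissibleWords_one, Set.ncard_image_of_injective _ cons_injective, ncard_tailsAfterMax,
      hsum 1 le_rfl]
    rfl
  | m + 2, ih, hsum =>
    rw [ncard_admissibleWords_add_two, ncard_tailsAfterMax, ncard_ascFamily, hsum _ le_rfl,
      hsum _ (by omega), ih m (by omega), Nat.fib_add_two (n := m + 1)]
    ring

theorem nonnesting_avoid_132_213 (n : ℕ) :
    {w : List ℕ | IsNonnesting n w ∧ Avoids w [1,3,2] ∧ Avoids w [2,1,3]}.ncard =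
      (Nat.fib (n + 1)) ^ 2 := by
  have : {w : List ℕ | IsNonnesting n w ∧ Avoids w [1,3,2] ∧ Avoids w [2,1,3]} =
      admissibleWords n :=
    Set.ext fun _ => isNonnesting_and_avoids_iff
  rw [this, ncard_admissibleWords]
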